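/- The set of weights of 12-variable Boolean functions of degree at most 6 of the form 0‖g₁‖g₂‖(g₁+g₂), where g₁, g₂ range over homogeneous degree-5 polynomials in 10 variables over F₂ (each a sum of at most three degree-5 monomials), contains every integer between 154 and 214 that is congruent to 2 modulo 4. -/

import Mathlib

/-!
The function `0‖g₁‖g₂‖(g₁+g₂)` equals `x₁₀ g₁ + x₁₁ g₂`, so its degree is at most
`1 + 5`, and its weight is `wt g₁ + wt g₂ + wt (g₁ + g₂)`. Weights of sums of monomials are
computed symbolically: over `𝔽₂`, `wt (f + g) = wt f + wt g - 2 wt (f g)`, the product of the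
monomials on `A` and `B` is the monomial on `A ∪ B`, and the monomial on `A` has weight
`2 ^ (m - |A|)`. Sixteen explicit pairs `(g₁, g₂)` then realise the sixteen weights.
-/

/-- Boolean functions in `m` variables. -/
abbrev BF (m : ℕ) := (Fin m → ZMod 2) → ZMod 2

/-- Hamming weight of a Boolean function. -/
def wt {m : ℕ} (f : BF m) : ℕ := (Finset.univ.filter fun x => f x = 1).card

/-- `f` has algebraic degree at most `r`: it is represented by a polynomial of total degree `≤ r`. -/
def degLE {m : ℕ} (f : BF m) (r : ℕ) : Prop :=
  ∃ p : MvPolynomial (Fin m) (ZMod 2), p.totalDegree ≤ r ∧ ∀ x, MvPolynomial.eval x p = f x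

/-- The monomial Boolean function with support `I`. -/
def mono {m : ℕ} (I : Finset (Fin m)) : BF m := fun x => ∏ i ∈ I, x i

/-- Concatenation `f₁‖f₂‖f₃‖f₄` of four `m`-variable functions into an `(m+2)`-variable function. -/
def concat4 {m : ℕ} (f1 f2 f3 f4 : BF m) : BF (m + 2) := fun x =>
  (1 + x ⟨m, by omega⟩) * (1 + x ⟨m + 1, by omega⟩) * f1 (fun i => x (Fin.castLE (by omega) i))
  + x ⟨m, by omega⟩ * (1 + x ⟨m + 1, by omega⟩) * f2 (fun i => x (Fin.castLE (by omega) i))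
  + (1 + x ⟨m, by omega⟩) * x ⟨m + 1, by omega⟩ * f3 (fun i => x (Fin.castLE (by omega) i))
  + x ⟨m, by omega⟩ * x ⟨m + 1, by omega⟩ * f4 (fun i => x (Fin.castLE (by omega) i))

/-- Concatenation `f‖g` of two `m`-variable functions into an `(m+1)`-variable function. -/
def concat2 {m : ℕ} (f g : BF m) : BF (m + 1) := fun x =>
  (1 + x (Fin.last m)) * f (fun i => x i.castSucc) + x (Fin.last m) * g (fun i => x i.castSucc)

/-- `g` is a sum of at most three degree-5 monomials (a homogeneous degree-5 polynomial as in
Construction 1). -/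
def homog5 (g : BF 10) : Prop :=
  ∃ S : Finset (Finset (Fin 10)), S.card ≤ 3 ∧ (∀ I ∈ S, I.card = 5) ∧
    ∀ x, g x = ∑ I ∈ S, ∏ i ∈ I, x i

open Finset

section

variable {m : ℕ}

lemma wt_eq_sum_val (f : BF m) : wt f = ∑ x, (f x).val := by
  rw [wt, card_filter]
  refine sum_congr rfl fun x _ => ?_
  generalize f x = a
  revert a
  decide

lemma wt_add (f g : BF m) : (wt (f + g) : ℤ) = wt f + wt g - 2 * wt (f * g) := by
  simp only [wt_eq_sum_val, Nat.cast_sum, mul_sum, ← sum_add_distrib, ← sum_sub_distrib,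
    Pi.add_apply, Pi.mul_apply]
  refine sum_congr rfl fun x _ => ?_
  generalize f x = a
  generalize g x = b
  revert a b
  decide

lemma wt_zero : wt (0 : BF m) = 0 := by
  simp [wt]

lemma wt_concat2 (f g : BF m) : wt (concat2 f g) = wt f + wt g := by
  have hsnoc (y : Fin m → ZMod 2) (b : ZMod 2) :
      concat2 f g (Fin.snoc y b) = (1 + b) * f y + b * g y := by
    simp [concat2]
  rw [wt_eq_sum_val, ← (Fin.snocEquiv _).sum_comp, Fintype.sum_prod_type]
  simp only [Fin.snocEquiv, Equiv.coe_fn_mk, hsnoc, wt_eq_sum_val]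
  rw [show (univ : Finset (ZMod 2)) = {0, 1} from rfl, sum_pair zero_ne_one]
  simp [show (1 + 1 : ZMod 2) = 0 from rfl]

lemma concat4_eq_concat2 (f1 f2 f3 f4 : BF m) :
    concat4 f1 f2 f3 f4 = concat2 (concat2 f1 f2) (concat2 f3 f4) := by
  funext x
  have hm : (Fin.last m).castSucc = (⟨m, by omega⟩ : Fin (m + 2)) := rfl
  have hm1 : Fin.last (m + 1) = ⟨m + 1, by omega⟩ := rfl
  have hcast (i : Fin m) : i.castSucc.castSucc = Fin.castLE (by omega) i := rfl
  simp only [concat2, concat4, hm, hm1, hcast]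
  ring

lemma wt_concat4 (f1 f2 f3 f4 : BF m) :
    wt (concat4 f1 f2 f3 f4) = wt f1 + wt f2 + wt f3 + wt f4 := by
  rw [concat4_eq_concat2, wt_concat2, wt_concat2, wt_concat2]
  ring

lemma mono_apply (I : Finset (Fin m)) (x : Fin m → ZMod 2) :
    mono I x = if ∀ i ∈ I, x i = 1 then 1 else 0 := by
  split_ifs with h
  · exact prod_eq_one h
  · obtain ⟨i, hi, hxi⟩ := not_forall₂.mp h
    exact prod_eq_zero hi (by revert hxi; generalize x i = a; revert a; decide)

lemma mono_eq_one_iff (I : Finset (Fin m)) (x : Fin m → ZMod 2) :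
    mono I x = 1 ↔ ∀ i ∈ I, x i = 1 := by
  rw [mono_apply]
  split_ifs with h <;> simpa using h

lemma mono_mul_mono (A B : Finset (Fin m)) : mono A * mono B = mono (A ∪ B) := by
  funext x
  simp only [Pi.mul_apply, mono_apply, mem_union, or_imp, forall_and]
  split_ifs <;> simp_all

lemma mono_empty : mono (∅ : Finset (Fin m)) = 1 := by
  funext x
  simp [mono]

lemma wt_mono (A : Finset (Fin m)) : wt (mono A) = 2 ^ (m - A.card) := by
  have : univ.filter (fun x => mono A x = 1) =
      Fintype.piFinset fun i => if i ∈ A then {1} else univ := by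
    ext x
    simp only [mono_eq_one_iff, mem_filter, mem_univ, true_and, Fintype.mem_piFinset]
    refine ⟨fun h i => ?_, fun h i hi => ?_⟩
    · split_ifs with hi <;> simp [h i, hi]
    · simpa [hi] using h i
  rw [wt, this, Fintype.card_piFinset]
  simp only [apply_ite card, card_singleton, card_univ, ZMod.card]
  rw [prod_ite]
  simp [filter_not, ← compl_eq_univ_sdiff, card_compl]

def monoSum (l : List (Finset (Fin m))) : BF m := (l.map mono).sum

lemma monoSum_cons (I : Finset (Fin m)) (l : List (Finset (Fin m))) :
    monoSum (I :: l) = mono I + monoSum l := by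
  simp [monoSum]

lemma monoSum_append (l₁ l₂ : List (Finset (Fin m))) :
    monoSum (l₁ ++ l₂) = monoSum l₁ + monoSum l₂ := by
  simp [monoSum]

lemma monoSum_apply (l : List (Finset (Fin m))) (x : Fin m → ZMod 2) :
    monoSum l x = (l.map fun I => ∏ i ∈ I, x i).sum := by
  induction l with
  | nil => rfl
  | cons I l ih => simp [monoSum_cons, ih, mono]

/-- `monoSumWt A l = wt (mono A * monoSum l)`, unfolded by `wt (f + g) = wt f + wt g - 2 wt (f g)`
along the list: an inclusion–exclusion over unions of supports that the kernel evaluates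
without enumerating the `2 ^ m` points. -/
def monoSumWt (A : Finset (Fin m)) : List (Finset (Fin m)) → ℤ
  | [] => 0
  | I :: l => 2 ^ (m - (A ∪ I).card) + monoSumWt A l - 2 * monoSumWt (A ∪ I) l

theorem wt_mono_mul_monoSum (A : Finset (Fin m)) (l : List (Finset (Fin m))) :
    (wt (mono A * monoSum l) : ℤ) = monoSumWt A l := by
  induction l generalizing A with
  | nil => simp [monoSum, monoSumWt, wt]
  | cons I l ih =>
    have hsplit : mono A * monoSum (I :: l) = mono (A ∪ I) + mono A * monoSum l := by
      rw [monoSum_cons, mul_add, mono_mul_mono]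
    have hoverlap : mono (A ∪ I) * (mono A * monoSum l) = mono (A ∪ I) * monoSum l := by
      rw [← mul_assoc, mono_mul_mono, union_right_comm, union_self]
    rw [hsplit, wt_add, hoverlap, ih, ih, wt_mono, monoSumWt]
    push_cast
    ring

theorem wt_monoSum (l : List (Finset (Fin m))) : (wt (monoSum l) : ℤ) = monoSumWt ∅ l := by
  simpa [mono_empty] using wt_mono_mul_monoSum ∅ l

def concatWt (l₁ l₂ : List (Finset (Fin m))) : ℤ :=
  monoSumWt ∅ l₁ + monoSumWt ∅ l₂ + monoSumWt ∅ (l₁ ++ l₂)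

theorem wt_concat4_zero_monoSum (l₁ l₂ : List (Finset (Fin m))) :
    (wt (concat4 0 (monoSum l₁) (monoSum l₂) (monoSum l₁ + monoSum l₂)) : ℤ) =
      concatWt l₁ l₂ := by
  simp only [wt_concat4, concatWt, ← monoSum_append, ← wt_monoSum, wt_zero]
  push_cast
  ring

lemma degLE_sum_prod {r : ℕ} (S : Finset (Finset (Fin m))) (hS : ∀ I ∈ S, I.card ≤ r) :
    degLE (fun x => ∑ I ∈ S, ∏ i ∈ I, x i) r := by
  refine ⟨∑ I ∈ S, ∏ i ∈ I, MvPolynomial.X i, ?_, fun x => by simp⟩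
  refine (MvPolynomial.totalDegree_finsetSum _ _).trans (Finset.sup_le fun I hI => ?_)
  refine (MvPolynomial.totalDegree_finsetProd _ _).trans ?_
  simpa using hS I hI

lemma degLE_concat4_zero {r : ℕ} {g₁ g₂ : BF m} (h₁ : degLE g₁ r) (h₂ : degLE g₂ r) :
    degLE (concat4 0 g₁ g₂ (g₁ + g₂)) (r + 1) := by
  obtain ⟨p₁, hp₁, hev₁⟩ := h₁
  obtain ⟨p₂, hp₂, hev₂⟩ := h₂
  let ι : Fin m → Fin (m + 2) := Fin.castLE (by omega)
  refine ⟨MvPolynomial.X ⟨m, by omega⟩ * MvPolynomial.rename ι p₁ +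
    MvPolynomial.X ⟨m + 1, by omega⟩ * MvPolynomial.rename ι p₂, ?_, fun x => ?_⟩
  · have hdeg (i : Fin (m + 2)) (p : MvPolynomial (Fin m) (ZMod 2)) (hp : p.totalDegree ≤ r) :
        (MvPolynomial.X i * MvPolynomial.rename ι p).totalDegree ≤ r + 1 := by
      refine (MvPolynomial.totalDegree_mul _ _).trans ?_
      have := (MvPolynomial.totalDegree_rename_le ι p).trans hp
      rw [MvPolynomial.totalDegree_X]
      omega
    exact (MvPolynomial.totalDegree_add _ _).trans (max_le (hdeg _ _ hp₁) (hdeg _ _ hp₂))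
  · simp only [map_add, map_mul, MvPolynomial.eval_X, MvPolynomial.eval_rename, Function.comp_def,
      ι, hev₁, hev₂, concat4, Pi.add_apply, Pi.zero_apply]
    generalize g₁ _ = a
    generalize g₂ _ = b
    generalize x _ = u
    generalize x _ = v
    revert a b u v
    decide

end

lemma homog5.degLE {g : BF 10} (h : homog5 g) : degLE g 5 := by
  obtain ⟨S, -, hS, hg⟩ := h
  rw [show g = _ from funext hg]
  exact degLE_sum_prod S fun I hI => (hS I hI).le

def IsHomog5List (l : List (Finset (Fin 10))) : Prop :=
  l.length ≤ 3 ∧ l.Nodup ∧ ∀ I ∈ l, I.card = 5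

instance : DecidablePred IsHomog5List := fun _ => inferInstanceAs (Decidable (_ ∧ _ ∧ _))

lemma IsHomog5List.homog5_monoSum {l : List (Finset (Fin 10))} (h : IsHomog5List l) :
    homog5 (monoSum l) := by
  obtain ⟨hlen, hnodup, hcard⟩ := h
  refine ⟨l.toFinset, (List.toFinset_card_of_nodup hnodup).trans_le hlen, by simpa using hcard,
    fun x => ?_⟩
  rw [monoSum_apply, List.sum_toFinset _ hnodup]

def weightWitnesses : List (List (Finset (Fin 10)) × List (Finset (Fin 10))) :=
  [([{1, 3, 5, 7, 9}, {0, 1, 2, 4, 6}],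
    [{0, 2, 4, 6, 8}, {0, 1, 2, 4, 6}]),
   ([{0, 1, 2, 3, 4}, {0, 1, 2, 4, 6}],
    [{5, 6, 7, 8, 9}, {4, 5, 6, 7, 8}, {3, 4, 5, 6, 7}]),
   ([{5, 6, 7, 8, 9}, {2, 3, 4, 5, 6}],
    [{0, 1, 2, 3, 4}, {1, 2, 3, 4, 5}]),
   ([{5, 6, 7, 8, 9}, {2, 3, 4, 5, 6}],
    [{0, 1, 2, 3, 4}, {2, 3, 4, 5, 6}]),
   ([{0, 1, 2, 3, 4}, {1, 2, 3, 4, 5}, {0, 1, 2, 4, 6}],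
    [{5, 6, 7, 8, 9}, {0, 1, 2, 4, 6}]),
   ([{5, 6, 7, 8, 9}, {2, 3, 4, 5, 6}],
    [{0, 1, 2, 3, 4}, {0, 1, 2, 4, 6}]),
   ([{5, 6, 7, 8, 9}, {2, 3, 4, 5, 6}],
    [{0, 1, 2, 3, 4}, {1, 2, 3, 4, 5}, {0, 1, 2, 4, 6}]),
   ([{5, 6, 7, 8, 9}, {2, 3, 4, 5, 6}],
    [{0, 1, 2, 3, 4}, {2, 3, 4, 5, 6}, {0, 1, 2, 4, 6}]),
   ([{5, 6, 7, 8, 9}, {0, 1, 2, 5, 6}, {0, 2, 4, 6, 8}],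
    [{0, 1, 2, 3, 4}, {0, 1, 2, 3, 5}]),
   ([{5, 6, 7, 8, 9}, {0, 1, 2, 5, 6}, {0, 2, 4, 6, 8}],
    [{0, 1, 2, 3, 4}, {0, 1, 2, 4, 6}]),
   ([{5, 6, 7, 8, 9}, {0, 1, 2, 5, 6}, {0, 2, 4, 6, 8}],
    [{0, 1, 2, 5, 6}, {0, 2, 4, 6, 8}, {1, 3, 5, 7, 9}]),
   ([{5, 6, 7, 8, 9}, {0, 1, 2, 5, 6}, {0, 2, 4, 6, 8}],
    [{0, 1, 2, 3, 4}, {0, 1, 2, 3, 5}, {0, 1, 2, 4, 6}]),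
   ([{5, 6, 7, 8, 9}, {0, 1, 2, 5, 6}, {0, 2, 4, 6, 8}],
    [{0, 1, 2, 3, 4}, {0, 1, 2, 3, 5}, {0, 2, 4, 6, 8}]),
   ([{5, 6, 7, 8, 9}, {0, 1, 2, 5, 6}, {0, 2, 4, 6, 8}],
    [{5, 6, 7, 8, 9}, {0, 1, 2, 5, 6}, {1, 3, 5, 7, 9}]),
   ([{5, 6, 7, 8, 9}, {0, 1, 2, 5, 6}, {0, 2, 4, 6, 8}],
    [{0, 1, 2, 3, 4}, {1, 2, 3, 4, 5}, {0, 1, 2, 4, 6}]),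
   ([{5, 6, 7, 8, 9}, {0, 1, 2, 5, 6}, {0, 2, 4, 6, 8}],
    [{0, 1, 2, 3, 5}, {0, 1, 2, 5, 6}, {1, 3, 5, 7, 9}])]

theorem exists_weightWitness : ∀ k : ℕ, k < 16 → ∃ p ∈ weightWitnesses,
    IsHomog5List p.1 ∧ IsHomog5List p.2 ∧ concatWt p.1 p.2 = 154 + 4 * (k : ℤ) := by
  decide +kernel

theorem stmt16 (w : ℕ) (h1 : 154 ≤ w) (h2 : w ≤ 214) (h3 : w % 4 = 2) :
    ∃ g1 g2 : BF 10, homog5 g1 ∧ homog5 g2 ∧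
      degLE (concat4 0 g1 g2 (g1 + g2)) 6 ∧
      wt (concat4 0 g1 g2 (g1 + g2)) = w := by
  obtain ⟨k, hk, rfl⟩ : ∃ k < 16, w = 154 + 4 * k := ⟨(w - 154) / 4, by omega, by omega⟩
  obtain ⟨⟨l₁, l₂⟩, -, hl₁, hl₂, hwt⟩ := exists_weightWitness k hk
  have hg₁ := hl₁.homog5_monoSum
  have hg₂ := hl₂.homog5_monoSum
  refine ⟨monoSum l₁, monoSum l₂, hg₁, hg₂, degLE_concat4_zero hg₁.degLE hg₂.degLE, ?_⟩
  exact_mod_cast (wt_concat4_zero_monoSum l₁ l₂).trans hwt
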